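/- arXiv:2306.04403 — 3 statements merged into one kernel-verified Lean document; each statement's English description precedes it below -/
import Mathlib

section
/- Let S be a state space, A a finite nonempty action set, r : S × A → ℝ a reward function, and F : S × A → S a deterministic transition function. Let Z be a measurable trajectory space with an integrable return function R : Z → ℝ, and suppose the policies π and μ induce, from each state, probability measures η_π(s) and η_μ(s) on Z with R integrable with respect to each. Define V^π(s) := ∫ R dη_π(s), V^μ(s') := ∫ R dη_μ(s'), Q^π(s,a) := r(s,a) + V^π(F(s,a)), A^π(s,a) := Q^π(s,a) − V^π(s); and the paired quantities V^{π,μ}(s,s') := ∫ (R(ζ) − R(ζ')) d(η_π(s) ×ₘ η_μ(s'))(ζ,ζ'), Q^{π,μ}(s,s';a) := r(s,a) + V^{π,μ}(F(s,a), s'), A^{π,μ}(s,s';a) := Q^{π,μ}(s,s';a) − V^{π,μ}(s,s'). Then for all states s, s' and every action a, A^π(s,a) = A^{π,μ}(s,s';a). -/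
open MeasureTheory

lemma integral_prod_fst_sub_snd {α β : Type*} [MeasurableSpace α] [MeasurableSpace β]
    (μ : Measure α) (ν : Measure β) [IsProbabilityMeasure μ] [IsProbabilityMeasure ν]
    {f : α → ℝ} {g : β → ℝ} (hf : Integrable f μ) (hg : Integrable g ν) :
    ∫ p, (f p.1 - g p.2) ∂(μ.prod ν) = ∫ x, f x ∂μ - ∫ y, g y ∂ν := by
  rw [integral_sub (hf.comp_fst ν) (hg.comp_snd μ), integral_fun_fst, integral_fun_snd]
  simp

theorem advantage_eq_paired_advantage_general
    {S : Type*} {A : Type*}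
    {Z : Type*} [MeasurableSpace Z]
    (r : S → A → ℝ) (F : S → A → S)
    (ηπ ημ : S → Measure Z)
    [∀ s, IsProbabilityMeasure (ηπ s)] [∀ s, IsProbabilityMeasure (ημ s)]
    (R : Z → ℝ)
    (hRπ : ∀ s, Integrable R (ηπ s)) (hRμ : ∀ s, Integrable R (ημ s))
    -- value functions of the original MDP
    (Vπ : S → ℝ) (hVπ : ∀ s, Vπ s = ∫ ζ, R ζ ∂(ηπ s))
    (Qπ : S → A → ℝ) (hQπ : ∀ s a, Qπ s a = r s a + Vπ (F s a))
    (Aπ : S → A → ℝ) (hAπ : ∀ s a, Aπ s a = Qπ s a - Vπ s)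
    -- paired (self-competitive) value functions
    (Vπμ : S → S → ℝ)
    (hVπμ : ∀ s s', Vπμ s s' = ∫ p : Z × Z, (R p.1 - R p.2) ∂((ηπ s).prod (ημ s')))
    (Qπμ : S → S → A → ℝ)
    (hQπμ : ∀ s s' a, Qπμ s s' a = r s a + Vπμ (F s a) s')
    (Aπμ : S → S → A → ℝ)
    (hAπμ : ∀ s s' a, Aπμ s s' a = Qπμ s s' a - Vπμ s s') :
    ∀ (s s' : S) (a : A), Aπ s a = Aπμ s s' a := by
  have paired_value : ∀ t t', Vπμ t t' = Vπ t - ∫ ζ, R ζ ∂(ημ t') := fun t t' => by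
    rw [hVπμ, hVπ, integral_prod_fst_sub_snd _ _ (hRπ t) (hRμ t')]
  intro s s' a
  -- the baseline `∫ R ∂ημ s'` is the same in both paired values, so it cancels
  rw [hAπ, hAπμ, hQπ, hQπμ, paired_value, paired_value]
  ring

/-- Lemma 1, equation (2): the advantage of π in the original MDP equals its
advantage in the self-competitive formulation baselined by a rollout of μ. -/
theorem advantage_eq_paired_advantage
    {S : Type*} [MeasurableSpace S] {A : Type*} [Fintype A] [Nonempty A]
    {Z : Type*} [MeasurableSpace Z]
    (r : S → A → ℝ) (F : S → A → S)
    (ηπ ημ : S → Measure Z)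
    [∀ s, IsProbabilityMeasure (ηπ s)] [∀ s, IsProbabilityMeasure (ημ s)]
    (R : Z → ℝ)
    (hRπ : ∀ s, Integrable R (ηπ s)) (hRμ : ∀ s, Integrable R (ημ s))
    -- value functions of the original MDP
    (Vπ : S → ℝ) (hVπ : ∀ s, Vπ s = ∫ ζ, R ζ ∂(ηπ s))
    (Qπ : S → A → ℝ) (hQπ : ∀ s a, Qπ s a = r s a + Vπ (F s a))
    (Aπ : S → A → ℝ) (hAπ : ∀ s a, Aπ s a = Qπ s a - Vπ s)
    -- paired (self-competitive) value functions
    (Vπμ : S → S → ℝ)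
    (hVπμ : ∀ s s', Vπμ s s' = ∫ p : Z × Z, (R p.1 - R p.2) ∂((ηπ s).prod (ημ s')))
    (Qπμ : S → S → A → ℝ)
    (hQπμ : ∀ s s' a, Qπμ s s' a = r s a + Vπμ (F s a) s')
    (Aπμ : S → S → A → ℝ)
    (hAπμ : ∀ s s' a, Aπμ s s' a = Qπμ s s' a - Vπμ s s') :
    ∀ (s s' : S) (a : A), Aπ s a = Aπμ s s' a :=
  advantage_eq_paired_advantage_general r F ηπ ημ R hRπ hRμ Vπ hVπ Qπ hQπ Aπ hAπ Vπμ hVπμ Qπμ hQπμ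
    Aπμ hAπμ
end

section
/- Let S be a state space, A a finite nonempty action set, r : S × A → ℝ a reward function, and F : S × A → S a deterministic transition function. Let Z be a measurable trajectory space with an integrable return function R : Z → ℝ, and suppose the policies π and μ induce, from each state, probability measures η_π(s) and η_μ(s) on Z with R integrable with respect to each. Define V^π(s) := ∫ R dη_π(s), Q^π(s,a) := r(s,a) + V^π(F(s,a)); V^{π,μ}(s,s') := ∫ (R(ζ) − R(ζ')) d(η_π(s) ×ₘ η_μ(s'))(ζ,ζ'), Q^{π,μ}(s,s';a) := r(s,a) + V^{π,μ}(F(s,a), s'). Then for every probability weight function w : A → ℝ with w(a) ≥ 0 for all a and ∑_{a ∈ A} w(a) = 1, and all states s, s': (∑_{a ∈ A} w(a)·Q^π(s,a)) − V^π(s) = (∑_{a ∈ A} w(a)·Q^{π,μ}(s,s';a)) − V^{π,μ}(s,s'). -/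
open MeasureTheory

lemma prod_integral_sub {Z : Type*} [MeasurableSpace Z]
    (μ ν : Measure Z) [IsProbabilityMeasure μ] [IsProbabilityMeasure ν]
    (R : Z → ℝ) (hμ : Integrable R μ) (hν : Integrable R ν) :
    ∫ p : Z × Z, (R p.1 - R p.2) ∂(μ.prod ν) = (∫ z, R z ∂μ) - ∫ z, R z ∂ν := by
  have hmapf : Measure.map Prod.fst (μ.prod ν) = μ := by
    simp [Measure.map_fst_prod (μ := μ) (ν := ν)]
  have hmaps : Measure.map Prod.snd (μ.prod ν) = ν := by
    simp [Measure.map_snd_prod (μ := μ) (ν := ν)]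
  have hmf : AEStronglyMeasurable R (Measure.map Prod.fst (μ.prod ν)) := by rw [hmapf]; exact hμ.1
  have hms : AEStronglyMeasurable R (Measure.map Prod.snd (μ.prod ν)) := by rw [hmaps]; exact hν.1
  have h1 : Integrable (fun p : Z × Z => R p.1) (μ.prod ν) :=
    (integrable_map_measure hmf measurable_fst.aemeasurable).mp (by rw [hmapf]; exact hμ)
  have h2 : Integrable (fun p : Z × Z => R p.2) (μ.prod ν) :=
    (integrable_map_measure hms measurable_snd.aemeasurable).mp (by rw [hmaps]; exact hν)
  have e1 : ∫ p : Z × Z, R p.1 ∂(μ.prod ν) = ∫ z, R z ∂μ := by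
    rw [← integral_map measurable_fst.aemeasurable hmf, hmapf]
  have e2 : ∫ p : Z × Z, R p.2 ∂(μ.prod ν) = ∫ z, R z ∂ν := by
    rw [← integral_map measurable_snd.aemeasurable hms, hmaps]
  rw [integral_sub h1 h2, e1, e2]

/-- Lemma 1, equation (3): the expected improvement of a candidate policy (weights w)
over π is unchanged when all values are baselined by a rollout of μ from s'. -/
theorem expected_improvement_eq_paired
    {S : Type*} [MeasurableSpace S] {A : Type*} [Fintype A] [Nonempty A]
    {Z : Type*} [MeasurableSpace Z]
    (r : S → A → ℝ) (F : S → A → S)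
    (ηπ ημ : S → Measure Z)
    [∀ s, IsProbabilityMeasure (ηπ s)] [∀ s, IsProbabilityMeasure (ημ s)]
    (R : Z → ℝ)
    (hRπ : ∀ s, Integrable R (ηπ s)) (hRμ : ∀ s, Integrable R (ημ s))
    (Vπ : S → ℝ) (hVπ : ∀ s, Vπ s = ∫ ζ, R ζ ∂(ηπ s))
    (Qπ : S → A → ℝ) (hQπ : ∀ s a, Qπ s a = r s a + Vπ (F s a))
    (Vπμ : S → S → ℝ)
    (hVπμ : ∀ s s', Vπμ s s' = ∫ p : Z × Z, (R p.1 - R p.2) ∂((ηπ s).prod (ημ s')))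
    (Qπμ : S → S → A → ℝ)
    (hQπμ : ∀ s s' a, Qπμ s s' a = r s a + Vπμ (F s a) s') :
    ∀ (w : A → ℝ), (∀ a, 0 ≤ w a) → (∑ a, w a = 1) →
      ∀ (s s' : S),
        (∑ a, w a * Qπ s a) - Vπ s = (∑ a, w a * Qπμ s s' a) - Vπμ s s' := by
  intro w hw hw1 s s'
  have hV : ∀ t t', Vπμ t t' = Vπ t - ∫ z, R z ∂(ημ t') := by
    intro t t'
    rw [hVπμ, hVπ, prod_integral_sub _ _ R (hRπ t) (hRμ t')]
  have hQ : ∀ a, Qπμ s s' a = Qπ s a - ∫ z, R z ∂(ημ s') := by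
    intro a; rw [hQπμ, hQπ, hV]; ring
  simp only [hQ, hV, mul_sub, Finset.sum_sub_distrib, ← Finset.sum_mul, hw1, one_mul]
  ring
end

section
/- Let S be a state space, A a finite nonempty action set, r : S × A → ℝ a reward function, and F : S × A → S a deterministic transition function. Let Z be a measurable trajectory space with an integrable return function R : Z → ℝ, and suppose the policies π and μ induce, from each state, probability measures η_π(s) and η_μ(s) on Z with R integrable with respect to each. Define V^π(s) := ∫ R dη_π(s), Q^π(s,a) := r(s,a) + V^π(F(s,a)); V^{π,μ}(s,s') := ∫ (R(ζ) − R(ζ')) d(η_π(s) ×ₘ η_μ(s'))(ζ,ζ'), Q^{π,μ}(s,s';a) := r(s,a) + V^{π,μ}(F(s,a), s'). Then for every probability weight function w : A → ℝ with w(a) ≥ 0 for all a and ∑_{a ∈ A} w(a) = 1, and all states s, s': ∑_{a ∈ A} w(a)·Q^π(s,a) ≥ V^π(s) if and only if ∑_{a ∈ A} w(a)·Q^{π,μ}(s,s';a) ≥ V^{π,μ}(s,s'). -/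
open MeasureTheory

/-- Equation (5) of the paper: a policy (weights w) improves π in the self-competitive
formulation baselined by μ iff it improves π in the original MDP. -/
theorem improvement_iff_paired_improvement
    {S : Type*} [MeasurableSpace S] {A : Type*} [Fintype A] [Nonempty A]
    {Z : Type*} [MeasurableSpace Z]
    (r : S → A → ℝ) (F : S → A → S)
    (ηπ ημ : S → Measure Z)
    [∀ s, IsProbabilityMeasure (ηπ s)] [∀ s, IsProbabilityMeasure (ημ s)]
    (R : Z → ℝ)
    (hRπ : ∀ s, Integrable R (ηπ s)) (hRμ : ∀ s, Integrable R (ημ s))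
    (Vπ : S → ℝ) (hVπ : ∀ s, Vπ s = ∫ ζ, R ζ ∂(ηπ s))
    (Qπ : S → A → ℝ) (hQπ : ∀ s a, Qπ s a = r s a + Vπ (F s a))
    (Vπμ : S → S → ℝ)
    (hVπμ : ∀ s s', Vπμ s s' = ∫ p : Z × Z, (R p.1 - R p.2) ∂((ηπ s).prod (ημ s')))
    (Qπμ : S → S → A → ℝ)
    (hQπμ : ∀ s s' a, Qπμ s s' a = r s a + Vπμ (F s a) s') :
    ∀ (w : A → ℝ), (∀ a, 0 ≤ w a) → (∑ a, w a = 1) →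
      ∀ (s s' : S),
        (∑ a, w a * Qπ s a) ≥ Vπ s ↔ (∑ a, w a * Qπμ s s' a) ≥ Vπμ s s' := by
  intro w hw hw1 s s'
  have key : ∀ x, Vπμ x s' = Vπ x - ∫ ζ, R ζ ∂(ημ s') := by
    intro x
    rw [hVπμ, hVπ]
    have h1 : Integrable (fun p : Z × Z => R p.1) ((ηπ x).prod (ημ s')) := by
      simpa using (hRπ x).mul_prod (integrable_const (1 : ℝ))
    have h2 : Integrable (fun p : Z × Z => R p.2) ((ηπ x).prod (ημ s')) := by
      simpa using (integrable_const (1 : ℝ)).mul_prod (hRμ s')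
    rw [integral_sub h1 h2, integral_fun_fst, integral_fun_snd]
    simp
  have hsum : (∑ a, w a * Qπμ s s' a) = (∑ a, w a * Qπ s a) - ∫ ζ, R ζ ∂(ημ s') := by
    have : ∀ a, w a * Qπμ s s' a = w a * Qπ s a - w a * ∫ ζ, R ζ ∂(ημ s') := by
      intro a
      rw [hQπμ, hQπ, key]
      ring
    rw [Finset.sum_congr rfl (fun a _ => this a), Finset.sum_sub_distrib,
      ← Finset.sum_mul, hw1, one_mul]
  rw [hsum, key s]
  constructor <;> intro h <;> linarith
end
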